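/- Let k, ℓ > 0, let π1 ∈ T_k and π2 ∈ T_ℓ, let 1 ≤ i ≤ slmax(π2), and let π = C2(π1, π2, i). Then lmax(π) = lmax(π1) + 1, rmax(π) = 1 + rmax(π2), asc(π) = asc(π1) + 1 + asc(π2), des(π) = des(π1) + 1 + des(π2), len(π) = len(π1) + 1 + len(π2), and sldes(π) = sldes(π1) + sldes(π2) + 1. -/

import Mathlib

namespace TSP

theorem foldr_max_mem {α : Type} [LinearOrder α] (x : α) (l : List α) :
    l.foldr max x ∈ x :: l := by
  induction l with
  | nil => simp
  | cons a t ih =>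
    simp only [List.foldr_cons]
    rcases max_choice a (t.foldr max x) with h | h <;> rw [h]
    · simp
    · rcases List.mem_cons.mp ih with h' | h'
      · rw [h']; simp
      · exact List.mem_cons.mpr (Or.inr (List.mem_cons.mpr (Or.inr h')))

theorem length_takeWhile_lt {α : Type} [DecidableEq α] {m : α} {l : List α}
    (h : m ∈ l) : (l.takeWhile (· ≠ m)).length < l.length := by
  have hd : l.dropWhile (· ≠ m) ≠ [] := by
    intro hnil
    have := List.dropWhile_eq_nil_iff.mp hnil m h
    simp at this
  have hsum : (l.takeWhile (· ≠ m)).length + (l.dropWhile (· ≠ m)).length = l.length := by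
    rw [← List.length_append, List.takeWhile_append_dropWhile]
  have : 0 < (l.dropWhile (· ≠ m)).length := List.length_pos_iff.mpr hd
  omega

theorem length_tail_dropWhile_lt {α : Type} [DecidableEq α] {m : α} {l : List α}
    (h : l ≠ []) : ((l.dropWhile (· ≠ m)).tail).length < l.length := by
  have hsum : (l.takeWhile (· ≠ m)).length + (l.dropWhile (· ≠ m)).length = l.length := by
    rw [← List.length_append, List.takeWhile_append_dropWhile]
  have h2 : ((l.dropWhile (· ≠ m)).tail).length = (l.dropWhile (· ≠ m)).length - 1 :=
    List.length_tail
  have : 0 < l.length := List.length_pos_iff.mpr h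
  omega

/-- The stack-sorting operator `S`: `S(ε) = ε`, and if `A` is nonempty with
largest element `m` and `A = A_L · (m) · A_R`, then `S(A) = S(A_L) · S(A_R) · (m)`. -/
def S {α : Type} [LinearOrder α] : List α → List α
  | [] => []
  | x :: l =>
    let m := l.foldr max x
    S ((x :: l).takeWhile (· ≠ m)) ++ S (((x :: l).dropWhile (· ≠ m)).tail) ++ [m]
termination_by l => l.length
decreasing_by
  · have hm := foldr_max_mem x l
    rw [← List.foldr_attach (f := max)] at hm
    exact length_takeWhile_lt hm
  · exact length_tail_dropWhile_lt (by simp)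

/-- The identity permutation `id_n = (1, 2, …, n)` as a list. -/
def idPerm (n : ℕ) : List ℕ := List.range' 1 n

/-- `l` is a permutation of `{1, …, n}` (viewed as a sequence). -/
def IsPermOf (n : ℕ) (l : List ℕ) : Prop := l.Perm (idPerm n)

/-- `l` is a two-stack sortable permutation (of `{1, …, len l}`). -/
def Is2SS (l : List ℕ) : Prop := IsPermOf l.length l ∧ S (S l) = idPerm l.length

/-- `σ^{+k}`: add `k` to every entry. -/
def shift (k : ℕ) (l : List ℕ) : List ℕ := l.map (· + k)

/-- `σ^{+(k1,m,k2)}`: add `k1` to every entry strictly smaller than `m`, `k2` to the others. -/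
def shift3 (k1 m k2 : ℕ) (l : List ℕ) : List ℕ :=
  l.map (fun a => if a < m then a + k1 else a + k2)

/-- Standardization `P(A)`: the permutation of `{1,…,len A}` in the same relative order. -/
def stand (l : List ℕ) : List ℕ := l.map (fun a => (l.filter (fun b => b ≤ a)).length)

/-- Avoidance of the pattern 231: no positions `i < j < k` with `l(k) < l(i) < l(j)`. -/
def Avoids231 (l : List ℕ) : Prop :=
  ¬ ∃ i j k, i < j ∧ j < k ∧ k < l.length ∧
      l.getD k 0 < l.getD i 0 ∧ l.getD i 0 < l.getD j 0

/-- The list of values of the left-to-right maxima of `l`, in order. -/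
def lrMaxima (l : List ℕ) : List ℕ :=
  ((List.range l.length).filter
    (fun i => (l.take i).all (fun b => b < l.getD i 0))).map (fun i => l.getD i 0)

/-- `lmax`: the number of left-to-right maxima. -/
def lmax (l : List ℕ) : ℕ :=
  (List.range l.length).countP (fun i => (l.take i).all (fun b => b < l.getD i 0))

/-- `rmax`: the number of right-to-left maxima. -/
def rmax (l : List ℕ) : ℕ :=
  (List.range l.length).countP (fun i => (l.drop (i+1)).all (fun b => b < l.getD i 0))

/-- `asc`: the number of ascents. -/
def asc (l : List ℕ) : ℕ :=
  (List.range (l.length - 1)).countP (fun i => l.getD i 0 < l.getD (i+1) 0)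

/-- `des`: the number of descents. -/
def des (l : List ℕ) : ℕ :=
  (List.range (l.length - 1)).countP (fun i => l.getD (i+1) 0 < l.getD i 0)

/-- `slmax(π)`: the number of left-to-right maxima of `S(π)`. -/
def slmax (l : List ℕ) : ℕ := lmax (S l)

/-- `sldes(π)`: the number of entries `a` that precede `a - 1` in `S(π)`. -/
def sldes (l : List ℕ) : ℕ :=
  (List.range (S l).length).countP
    (fun i => ((S l).drop (i+1)).any (fun b => b + 1 = (S l).getD i 0))

/-- The construction `C1(π1, π2) = π1 · (k+ℓ+1) · π2^{+k}`. -/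
def C1 (p1 p2 : List ℕ) : List ℕ :=
  p1 ++ (p1.length + p2.length + 1) :: shift p1.length p2

/-- The `i`-th left-to-right maximum `a_i` of `S(π2)` (1-indexed). -/
def lrm (p2 : List ℕ) (i : ℕ) : ℕ := (lrMaxima (S p2)).getD (i - 1) 0

/-- The construction `C2(π1, π2, i) = π1^{+(0,k,a_i)} · (k+ℓ+1) · π2^{+(k-1,a_i+1,k)}`. -/
def C2 (p1 p2 : List ℕ) (i : ℕ) : List ℕ :=
  shift3 0 p1.length (lrm p2 i) p1 ++
    (p1.length + p2.length + 1) :: shift3 (p1.length - 1) (lrm p2 i + 1) p1.length p2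

/-- The decomposition `D(π) = (P(π_ℓ), P(π_r))`, where `π = π_ℓ · (n) · π_r`
with `n` the largest entry of `π`. -/
def D (l : List ℕ) : List ℕ × List ℕ :=
  match l with
  | [] => ([], [])
  | x :: t =>
    let m := t.foldr max x
    (stand ((x :: t).takeWhile (· ≠ m)), stand (((x :: t).dropWhile (· ≠ m)).tail))

/-!
In `C2(π₁, π₂, i) = A · n · B` the maximum `n` separates order-preserving relabelings `A`
of `π₁` and `B` of `π₂`. The statistics `lmax`, `rmax`, `asc`, `des` depend only on relative
order, and the peak `n` adds exactly one to each of them.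

Since `S(A · n · B) = S(A) · S(B) · n` and `S` commutes with order-preserving relabelings,
`S(C2(π₁, π₂, i))` is `S(π₁)` with its last entry `k` raised to `k + aᵢ`, followed by the
relabeled `S(π₂)` and `n`. The raised entry now precedes its predecessor `aᵢ + k - 1`, which
accounts for the extra `1`. The relabeling of `S(π₂)` could only destroy a pair `aᵢ + 1`
preceding `aᵢ`, and that pair does not occur because `aᵢ` is a left-to-right maximum
of `S(π₂)`.
-/

section StackSort

variable {α β : Type} [LinearOrder α] [LinearOrder β]

lemma le_foldr_max {x y : α} {l : List α} (h : y ∈ x :: l) : y ≤ l.foldr max x := by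
  rcases List.mem_cons.1 h with rfl | h
  · clear h
    induction l with
    | nil => exact le_rfl
    | cons a t ih => exact le_max_of_le_right ih
  · exact List.le_max_of_le' _ h le_rfl

lemma foldr_max_eq_of_forall_le {x m : α} {l : List α} (hm : m ∈ x :: l)
    (hle : ∀ y ∈ x :: l, y ≤ m) : l.foldr max x = m :=
  le_antisymm (hle _ (foldr_max_mem x l)) (le_foldr_max hm)

lemma S_nil : S ([] : List α) = [] := by rw [S]

lemma S_cons (x : α) (l : List α) :
    S (x :: l) = S ((x :: l).takeWhile (· ≠ l.foldr max x)) ++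
      S (((x :: l).dropWhile (· ≠ l.foldr max x)).tail) ++ [l.foldr max x] := by
  rw [S]

lemma takeWhile_append_cons_dropWhile_tail {m : α} {l : List α} (h : m ∈ l) :
    l.takeWhile (· ≠ m) ++ m :: (l.dropWhile (· ≠ m)).tail = l := by
  have hne : l.dropWhile (· ≠ m) ≠ [] := fun hnil => by
    simpa using List.dropWhile_eq_nil_iff.mp hnil m h
  have hhead : (l.dropWhile (· ≠ m)).head hne = m := by
    simpa using List.head_dropWhile_not (· ≠ m) hne
  conv_rhs => rw [← List.takeWhile_append_dropWhile (p := (· ≠ m)) (l := l),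
    ← List.cons_head_tail hne, hhead]

lemma S_perm : ∀ l : List α, (S l).Perm l
  | [] => by rw [S_nil]
  | x :: l => by
    rw [S_cons, List.append_assoc]
    refine ((S_perm _).append ((S_perm _).append (.refl _))).trans ?_
    refine (List.Perm.append_left _ (List.perm_append_singleton _ _)).trans ?_
    rw [takeWhile_append_cons_dropWhile_tail (foldr_max_mem x l)]
termination_by l => l.length
decreasing_by
  · exact length_takeWhile_lt (foldr_max_mem x l)
  · exact length_tail_dropWhile_lt (List.cons_ne_nil _ _)

lemma S_map {f : α → β} (hf : StrictMono f) : ∀ l : List α, S (l.map f) = (S l).map f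
  | [] => by rw [List.map_nil, S_nil, S_nil, List.map_nil]
  | x :: l => by
    have hmax : (l.map f).foldr max (f x) = f (l.foldr max x) := by
      induction l with
      | nil => rfl
      | cons a t ih => simp only [List.map_cons, List.foldr_cons, ih, hf.monotone.map_max]
    have hpred : ((· ≠ f (l.foldr max x)) ∘ f : α → Bool) = (· ≠ l.foldr max x) := by
      funext y
      simp [hf.injective.eq_iff]
    rw [List.map_cons, S_cons, S_cons, hmax, ← List.map_cons, List.takeWhile_map,
      List.dropWhile_map, hpred, ← List.map_tail, S_map hf, S_map hf]
    simp only [List.map_append, List.map_cons, List.map_nil]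
termination_by l => l.length
decreasing_by
  · exact length_takeWhile_lt (foldr_max_mem x l)
  · exact length_tail_dropWhile_lt (List.cons_ne_nil _ _)

lemma S_eq_append_singleton {l : List α} {m : α} (hm : m ∈ l) (hle : ∀ y ∈ l, y ≤ m) :
    ∃ w, S l = w ++ [m] := by
  obtain _ | ⟨x, t⟩ := l
  · simp at hm
  · rw [S_cons, foldr_max_eq_of_forall_le hm hle]
    exact ⟨_, rfl⟩

lemma S_append_cons {A B : List α} {m : α} (hA : ∀ y ∈ A, y < m) (hB : ∀ y ∈ B, y < m) :
    S (A ++ m :: B) = S A ++ S B ++ [m] := by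
  have hA' : ∀ y ∈ A, (y ≠ m : Bool) = true := fun y hy => by simpa using (hA y hy).ne
  have htake : (A ++ m :: B).takeWhile (· ≠ m) = A := by
    rw [List.takeWhile_append, List.takeWhile_eq_self_iff.mpr hA']
    simp
  have hdrop : (A ++ m :: B).dropWhile (· ≠ m) = m :: B := by
    rw [List.dropWhile_append, List.dropWhile_eq_nil_iff.mpr hA']
    simp
  obtain ⟨x, t, hxt⟩ : ∃ x t, A ++ m :: B = x :: t := List.exists_cons_of_ne_nil (by simp)
  have hmax : t.foldr max x = m := by
    refine foldr_max_eq_of_forall_le (by simp [← hxt]) fun y hy => ?_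
    rw [← hxt] at hy
    simp only [List.mem_append, List.mem_cons] at hy
    rcases hy with hy | rfl | hy
    exacts [(hA y hy).le, le_rfl, (hB y hy).le]
  rw [hxt, S_cons, hmax, ← hxt, htake, hdrop, List.tail_cons]

end StackSort

namespace IsPermOf

variable {n : ℕ} {l : List ℕ}

lemma nodup (h : IsPermOf n l) : l.Nodup := h.nodup_iff.2 List.nodup_range'

lemma mem_iff (h : IsPermOf n l) {y : ℕ} : y ∈ l ↔ 1 ≤ y ∧ y ≤ n := by
  rw [List.Perm.mem_iff h, idPerm, List.mem_range'_1]
  omega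

lemma stackSort (h : IsPermOf n l) : IsPermOf n (S l) := (S_perm l).trans h

lemma exists_S_eq_append (hl : IsPermOf n l) (hn : 0 < n) :
    ∃ w, S l = w ++ [n] ∧ ∀ x ∈ w, x < n := by
  obtain ⟨w, hw⟩ := S_eq_append_singleton (hl.mem_iff.2 ⟨hn, le_rfl⟩) fun y hy =>
    (hl.mem_iff.1 hy).2
  refine ⟨w, hw, fun x hx => ?_⟩
  have hnd := hw ▸ hl.stackSort.nodup
  have hxn : x ≠ n := fun h => (List.nodup_append.1 hnd).2.2 x hx n (by simp) h
  have := (hl.stackSort.mem_iff.1 (hw ▸ List.mem_append_left _ hx : x ∈ S l)).2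
  omega

end IsPermOf

section Counting

variable (p : List ℕ → ℕ → Bool) (q : ℕ → List ℕ → Bool) (r : ℕ → ℕ → Bool)

def prefixCount (l : List ℕ) : ℕ :=
  (List.range l.length).countP fun i => p (l.take i) (l.getD i 0)

def suffixCount (l : List ℕ) : ℕ :=
  (List.range l.length).countP fun i => q (l.getD i 0) (l.drop (i + 1))

def adjCount (l : List ℕ) : ℕ :=
  (List.range (l.length - 1)).countP fun i => r (l.getD i 0) (l.getD (i + 1) 0)

lemma prefixCount_cons (x : ℕ) (t : List ℕ) :
    prefixCount p (x :: t) =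
      prefixCount (fun s y => p (x :: s) y) t + if p [] x then 1 else 0 := by
  simp [prefixCount, List.range_succ_eq_map, List.countP_cons, List.countP_map, Function.comp_def]

lemma suffixCount_cons (x : ℕ) (t : List ℕ) :
    suffixCount q (x :: t) = suffixCount q t + if q x t then 1 else 0 := by
  simp [suffixCount, List.range_succ_eq_map, List.countP_cons, List.countP_map, Function.comp_def]

lemma adjCount_cons_cons (x y : ℕ) (t : List ℕ) :
    adjCount r (x :: y :: t) = adjCount r (y :: t) + if r x y then 1 else 0 := by
  simp [adjCount, List.range_succ_eq_map, List.countP_cons, List.countP_map, Function.comp_def]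

lemma prefixCount_append (u v : List ℕ) :
    prefixCount p (u ++ v) = prefixCount p u + prefixCount (fun s y => p (u ++ s) y) v := by
  induction u generalizing p with
  | nil => simp [prefixCount]
  | cons x u ih => simp only [List.cons_append, prefixCount_cons, ih]; omega

lemma prefixCount_map (f : ℕ → ℕ) (l : List ℕ) :
    prefixCount p (l.map f) = prefixCount (fun s y => p (s.map f) (f y)) l := by
  induction l generalizing p with
  | nil => rfl
  | cons x l ih => simp only [List.map_cons, prefixCount_cons, ih, List.map_nil]

lemma prefixCount_eq_zero {l : List ℕ} (h : ∀ s, ∀ y ∈ l, p s y = false) :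
    prefixCount p l = 0 := by
  induction l generalizing p with
  | nil => rfl
  | cons x l ih =>
    rw [prefixCount_cons, ih _ fun s y hy => h _ y (List.mem_cons_of_mem x hy),
      h [] x List.mem_cons_self]
    rfl

lemma suffixCount_append (u v : List ℕ) :
    suffixCount q (u ++ v) = suffixCount (fun x s => q x (s ++ v)) u + suffixCount q v := by
  induction u with
  | nil => simp [suffixCount]
  | cons x u ih => simp only [List.cons_append, suffixCount_cons, ih]; omega

lemma suffixCount_map (f : ℕ → ℕ) (l : List ℕ) :
    suffixCount q (l.map f) = suffixCount (fun x s => q (f x) (s.map f)) l := by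
  induction l with
  | nil => rfl
  | cons x l ih => simp only [List.map_cons, suffixCount_cons, ih]

lemma suffixCount_congr {q q' : ℕ → List ℕ → Bool} {l : List ℕ}
    (h : ∀ u x s, l = u ++ x :: s → q x s = q' x s) : suffixCount q l = suffixCount q' l := by
  induction l with
  | nil => rfl
  | cons x l ih =>
    rw [suffixCount_cons, suffixCount_cons, h [] x l rfl,
      ih fun u y s hl => h (x :: u) y s (by rw [hl, List.cons_append])]

lemma suffixCount_eq_zero {l : List ℕ} (h : ∀ x ∈ l, ∀ s, q x s = false) :
    suffixCount q l = 0 := by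
  induction l with
  | nil => rfl
  | cons x l ih =>
    rw [suffixCount_cons, ih fun y hy => h y (List.mem_cons_of_mem x hy),
      h x List.mem_cons_self]
    rfl

lemma adjCount_singleton (x : ℕ) : adjCount r [x] = 0 := rfl

lemma adjCount_map (f : ℕ → ℕ) (l : List ℕ) :
    adjCount r (l.map f) = adjCount (fun x y => r (f x) (f y)) l := by
  induction l with
  | nil => rfl
  | cons x l ih =>
    cases l with
    | nil => rfl
    | cons y l => simp only [List.map_cons, adjCount_cons_cons, ← ih]

lemma adjCount_append_cons (u v : List ℕ) (x : ℕ) :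
    adjCount r (u ++ x :: v) = adjCount r (u ++ [x]) + adjCount r (x :: v) := by
  induction u with
  | nil => simp [adjCount]
  | cons y u ih =>
    cases u with
    | nil =>
      rw [List.cons_append, List.nil_append, adjCount_cons_cons, List.singleton_append,
        adjCount_cons_cons, adjCount_singleton]
      omega
    | cons z u =>
      simp only [List.cons_append] at ih ⊢
      rw [adjCount_cons_cons, adjCount_cons_cons, ih]
      omega

lemma adjCount_append_cons_cons (u v : List ℕ) (x m y : ℕ) :
    adjCount r ((u ++ [x]) ++ m :: y :: v) = adjCount r (u ++ [x]) + adjCount r (y :: v) +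
      ((if r x m then 1 else 0) + if r m y then 1 else 0) := by
  rw [adjCount_append_cons, List.append_assoc, List.singleton_append, adjCount_append_cons,
    adjCount_cons_cons, adjCount_cons_cons, adjCount_singleton]
  omega

end Counting

section Statistics

variable {A B : List ℕ} {m : ℕ} {f : ℕ → ℕ}

lemma lmax_eq_prefixCount (l : List ℕ) :
    lmax l = prefixCount (fun s y => s.all (· < y)) l := rfl

lemma rmax_eq_suffixCount (l : List ℕ) :
    rmax l = suffixCount (fun x s => s.all (· < x)) l := rfl

lemma asc_eq_adjCount (l : List ℕ) : asc l = adjCount (fun x y => x < y) l := rfl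

lemma des_eq_adjCount (l : List ℕ) : des l = adjCount (fun x y => y < x) l := rfl

lemma lmax_map (hf : StrictMono f) (l : List ℕ) : lmax (l.map f) = lmax l := by
  simp only [lmax_eq_prefixCount, prefixCount_map, List.all_map, Function.comp_def,
    hf.lt_iff_lt]

lemma rmax_map (hf : StrictMono f) (l : List ℕ) : rmax (l.map f) = rmax l := by
  simp only [rmax_eq_suffixCount, suffixCount_map, List.all_map, Function.comp_def,
    hf.lt_iff_lt]

lemma asc_map (hf : StrictMono f) (l : List ℕ) : asc (l.map f) = asc l := by
  simp only [asc_eq_adjCount, adjCount_map, hf.lt_iff_lt]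

lemma des_map (hf : StrictMono f) (l : List ℕ) : des (l.map f) = des l := by
  simp only [des_eq_adjCount, adjCount_map, hf.lt_iff_lt]

lemma lmax_append_cons (hA : ∀ y ∈ A, y < m) (hB : ∀ y ∈ B, y < m) :
    lmax (A ++ m :: B) = lmax A + 1 := by
  have hAm : A.all (· < m) = true := by simpa using hA
  have hB' : ∀ s, ∀ y ∈ B, (A ++ m :: s).all (· < y) = false := fun s y hy =>
    List.all_eq_false.2 ⟨m, by simp, by simpa using (hB y hy).le⟩
  rw [lmax_eq_prefixCount, prefixCount_append, prefixCount_cons, prefixCount_eq_zero _ hB',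
    List.append_nil, hAm]
  rfl

lemma rmax_append_cons (hA : ∀ y ∈ A, y < m) (hB : ∀ y ∈ B, y < m) :
    rmax (A ++ m :: B) = 1 + rmax B := by
  have hBm : B.all (· < m) = true := by simpa using hB
  have hA' : ∀ x ∈ A, ∀ s, (s ++ m :: B).all (· < x) = false := fun x hx s =>
    List.all_eq_false.2 ⟨m, by simp, by simpa using (hA x hx).le⟩
  rw [rmax_eq_suffixCount, suffixCount_append, suffixCount_cons, suffixCount_eq_zero _ hA', hBm,
    if_pos rfl, rmax_eq_suffixCount]
  omega

lemma asc_append_cons (hA : ∀ y ∈ A, y < m) (hB : ∀ y ∈ B, y < m) (hA₀ : A ≠ [])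
    (hB₀ : B ≠ []) : asc (A ++ m :: B) = asc A + 1 + asc B := by
  obtain ⟨A, x, rfl⟩ := (List.eq_nil_or_concat' A).resolve_left hA₀
  obtain ⟨y, B, rfl⟩ := List.exists_cons_of_ne_nil hB₀
  simp only [asc_eq_adjCount, adjCount_append_cons_cons]
  simp [hA x (by simp), not_lt.2 (hB y (by simp)).le]
  omega

lemma des_append_cons (hA : ∀ y ∈ A, y < m) (hB : ∀ y ∈ B, y < m) (hA₀ : A ≠ [])
    (hB₀ : B ≠ []) : des (A ++ m :: B) = des A + 1 + des B := by
  obtain ⟨A, x, rfl⟩ := (List.eq_nil_or_concat' A).resolve_left hA₀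
  obtain ⟨y, B, rfl⟩ := List.exists_cons_of_ne_nil hB₀
  simp only [des_eq_adjCount, adjCount_append_cons_cons]
  simp [hB y (by simp), not_lt.2 (hA x (by simp)).le]
  omega

end Statistics

section InverseDescents

variable {u v l : List ℕ} {f : ℕ → ℕ}

/-- For a permutation, the number of descents of its inverse. -/
def ides (l : List ℕ) : ℕ := suffixCount (fun x s => s.any (· + 1 = x)) l

lemma sldes_eq_ides (l : List ℕ) : sldes l = ides (S l) := rfl

lemma ides_singleton (x : ℕ) : ides [x] = 0 := rfl

lemma ides_cons (x : ℕ) (t : List ℕ) :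
    ides (x :: t) = ides t + if t.any (· + 1 = x) then 1 else 0 :=
  suffixCount_cons _ x t

lemma ides_append (h : ∀ x ∈ u, ∀ b ∈ v, b + 1 ≠ x) :
    ides (u ++ v) = ides u + ides v := by
  rw [ides, suffixCount_append]
  congr 1
  refine suffixCount_congr fun w x s hu => ?_
  have hx : x ∈ u := by simp [hu]
  rw [List.any_append, (List.any_eq_false (l := v)).2 fun b hb => by simpa using h x hx b hb,
    Bool.or_false]

lemma ides_map (h : ∀ w x s, l = w ++ x :: s → ∀ b ∈ s, (f b + 1 = f x ↔ b + 1 = x)) :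
    ides (l.map f) = ides l := by
  rw [ides, suffixCount_map]
  refine suffixCount_congr fun w x s hl => ?_
  rw [Bool.eq_iff_iff]
  simp only [List.any_map, List.any_eq_true, Function.comp_apply, decide_eq_true_eq]
  exact exists_congr fun b => and_congr_right fun hb => h w x s hl b hb

end InverseDescents

section LeftToRightMaxima

variable {l u s : List ℕ} {a : ℕ}

lemma length_lrMaxima (l : List ℕ) : (lrMaxima l).length = lmax l := by
  simp [lrMaxima, lmax, List.countP_eq_length_filter]

lemma lrm_mem_lrMaxima {p : List ℕ} {i : ℕ} (hi1 : 1 ≤ i) (hi2 : i ≤ slmax p) :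
    lrm p i ∈ lrMaxima (S p) := by
  have hi : i - 1 < (lrMaxima (S p)).length := by
    rw [length_lrMaxima]
    unfold slmax at hi2
    omega
  rw [lrm, List.getD_eq_getElem _ _ hi]
  exact List.getElem_mem hi

lemma mem_of_mem_lrMaxima (ha : a ∈ lrMaxima l) : a ∈ l := by
  obtain ⟨j, hj, rfl⟩ := List.mem_map.1 ha
  have hjl : j < l.length := List.mem_range.1 (List.mem_filter.1 hj).1
  rw [List.getD_eq_getElem _ _ hjl]
  exact List.getElem_mem hjl

lemma lt_of_mem_lrMaxima (hl : l.Nodup) (ha : a ∈ lrMaxima l) (hus : l = u ++ a :: s) :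
    ∀ y ∈ u, y < a := by
  subst hus
  obtain ⟨j, hj, hja⟩ := List.mem_map.1 ha
  obtain ⟨hjr, hmax⟩ := List.mem_filter.1 hj
  have hjl : j < (u ++ a :: s).length := List.mem_range.1 hjr
  have hul : u.length < (u ++ a :: s).length := by simp
  obtain rfl : j = u.length := by
    rw [← hl.getElem_inj_iff (hi := hjl) (hj := hul), ← List.getD_eq_getElem _ 0 hjl, hja]
    simp
  simpa using hmax

lemma not_mem_after_succ_of_mem_lrMaxima (hl : l.Nodup) (ha : a ∈ lrMaxima l)
    (hus : l = u ++ (a + 1) :: s) : a ∉ s := by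
  intro has
  obtain ⟨s₁, s₂, rfl⟩ := List.append_of_mem has
  have := lt_of_mem_lrMaxima hl ha (u := u ++ (a + 1) :: s₁) (s := s₂) (by simp [hus]) (a + 1)
    (by simp)
  omega

end LeftToRightMaxima

section Construction

lemma strictMono_shift3 {k₁ k₂ m : ℕ} (h : k₁ ≤ k₂) :
    StrictMono fun a : ℕ => if a < m then a + k₁ else a + k₂ := by
  intro x y hxy
  simp only
  split_ifs <;> omega

lemma lt_of_mem_shift3 {k₁ k₂ m N : ℕ} {l : List ℕ} (h : k₁ ≤ k₂)
    (hl : ∀ y ∈ l, y + k₂ < N) : ∀ y ∈ shift3 k₁ m k₂ l, y < N := by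
  simp only [shift3, List.mem_map]
  rintro _ ⟨y, hy, rfl⟩
  have := hl y hy
  split_ifs <;> omega

lemma ides_shift3_of_mem_lrMaxima {v : List ℕ} {a k : ℕ} (hv : v.Nodup)
    (ha : a ∈ lrMaxima v) : ides (shift3 (k - 1) (a + 1) k v) = ides v :=
  ides_map fun u x s hus b hb => by
    have hab : ¬ (x = a + 1 ∧ b = a) := fun ⟨hx, hb'⟩ =>
      not_mem_after_succ_of_mem_lrMaxima hv ha (hx ▸ hus) (hb' ▸ hb)
    split_ifs <;> omega

variable {π₁ π₂ : List ℕ} {i : ℕ}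

lemma C2_parts_lt_peak (hp₁ : IsPermOf π₁.length π₁) (hp₂ : IsPermOf π₂.length π₂)
    (ha : lrm π₂ i ∈ lrMaxima (S π₂)) :
    (∀ y ∈ shift3 0 π₁.length (lrm π₂ i) π₁, y < π₁.length + π₂.length + 1) ∧
      ∀ y ∈ shift3 (π₁.length - 1) (lrm π₂ i + 1) π₁.length π₂,
        y < π₁.length + π₂.length + 1 := by
  have haM := (hp₂.stackSort.mem_iff.1 (mem_of_mem_lrMaxima ha)).2
  exact ⟨lt_of_mem_shift3 (Nat.zero_le _) fun y hy => by have := (hp₁.mem_iff.1 hy).2; omega,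
    lt_of_mem_shift3 (Nat.sub_le _ _) fun y hy => by have := (hp₂.mem_iff.1 hy).2; omega⟩

lemma sldes_C2 (hp₁ : IsPermOf π₁.length π₁) (hp₂ : IsPermOf π₂.length π₂)
    (hk : 0 < π₁.length) (ha : lrm π₂ i ∈ lrMaxima (S π₂)) :
    sldes (C2 π₁ π₂ i) = sldes π₁ + sldes π₂ + 1 := by
  set K := π₁.length
  set M := π₂.length
  set a := lrm π₂ i
  set B := shift3 (K - 1) (a + 1) K (S π₂)
  have haM : 1 ≤ a ∧ a ≤ M := hp₂.stackSort.mem_iff.1 (mem_of_mem_lrMaxima ha)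
  obtain ⟨w, hw, hwK⟩ := hp₁.exists_S_eq_append hk
  have hB : ∀ y ∈ B, K ≤ y ∧ y ≤ K + M := by
    simp only [B, shift3, List.mem_map]
    rintro _ ⟨y, hy, rfl⟩
    have := hp₂.stackSort.mem_iff.1 hy
    split_ifs <;> omega
  have hS : S (C2 π₁ π₂ i) = w ++ (K + a) :: (B ++ [K + M + 1]) := by
    obtain ⟨hA, hB⟩ := C2_parts_lt_peak hp₁ hp₂ ha
    rw [C2, S_append_cons hA hB, shift3, shift3, S_map (strictMono_shift3 (Nat.zero_le _)),
      S_map (strictMono_shift3 (Nat.sub_le _ _)), hw, List.map_append,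
      List.map_congr_left fun x hx => if_pos (hwK x hx)]
    simp [K, M, a, B, shift3]
  have hw_ides : ides (S π₁) = ides w := by
    rw [hw, ides_append, ides_singleton, Nat.add_zero]
    simpa using fun x hx h => by have := hwK x hx; omega
  rw [sldes_eq_ides, sldes_eq_ides, sldes_eq_ides, hS, hw_ides, ides_append, ides_cons,
    ides_append, ides_shift3_of_mem_lrMaxima hp₂.stackSort.nodup ha, ides_singleton, if_pos]
  · omega
  · simp only [List.any_append, Bool.or_eq_true, List.any_eq_true]
    refine Or.inl ⟨a + (K - 1), List.mem_map.2 ⟨a, mem_of_mem_lrMaxima ha, by simp⟩, ?_⟩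
    simp only [decide_eq_true_eq]
    omega
  · simpa using fun x hx => by have := hB x hx; omega
  · intro x hx b hb
    have := hwK x hx
    simp only [List.mem_cons, List.mem_append, List.not_mem_nil, or_false] at hb
    rcases hb with rfl | hb | rfl
    · omega
    · have := hB b hb; omega
    · omega

end Construction

/-- statistics of `C2(π1, π2, i)` for nonempty 2SSPs `π1 ∈ T_k`, `π2 ∈ T_ℓ`
and `1 ≤ i ≤ slmax(π2)`. -/
theorem C2_stats (k ℓ : ℕ) (hk : 0 < k) (hℓ : 0 < ℓ) (π1 π2 : List ℕ)
    (h1 : π1.length = k) (h1' : Is2SS π1) (h2 : π2.length = ℓ) (h2' : Is2SS π2)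
    (i : ℕ) (hi1 : 1 ≤ i) (hi2 : i ≤ slmax π2) :
    lmax (C2 π1 π2 i) = lmax π1 + 1 ∧
    rmax (C2 π1 π2 i) = 1 + rmax π2 ∧
    asc (C2 π1 π2 i) = asc π1 + 1 + asc π2 ∧
    des (C2 π1 π2 i) = des π1 + 1 + des π2 ∧
    (C2 π1 π2 i).length = π1.length + 1 + π2.length ∧
    sldes (C2 π1 π2 i) = sldes π1 + sldes π2 + 1 := by
  subst h1 h2
  have ha := lrm_mem_lrMaxima hi1 hi2
  obtain ⟨hA, hB⟩ := C2_parts_lt_peak h1'.1 h2'.1 ha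
  have hA₀ : shift3 0 π1.length (lrm π2 i) π1 ≠ [] := by
    simpa [shift3, ← List.length_pos_iff] using hk
  have hB₀ : shift3 (π1.length - 1) (lrm π2 i + 1) π1.length π2 ≠ [] := by
    simpa [shift3, ← List.length_pos_iff] using hℓ
  have hf := strictMono_shift3 (m := π1.length) (Nat.zero_le (lrm π2 i))
  have hg := strictMono_shift3 (m := lrm π2 i + 1) (Nat.sub_le π1.length 1)
  refine ⟨?_, ?_, ?_, ?_, ?_, sldes_C2 h1'.1 h2'.1 hk ha⟩
  · rw [C2, lmax_append_cons hA hB, shift3, lmax_map hf]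
  · rw [C2, rmax_append_cons hA hB, shift3, rmax_map hg]
  · rw [C2, asc_append_cons hA hB hA₀ hB₀, shift3, shift3, asc_map hf, asc_map hg]
  · rw [C2, des_append_cons hA hB hA₀ hB₀, shift3, shift3, des_map hf, des_map hg]
  · simp [C2, shift3]
    omega

end TSP
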